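/- arXiv:2204.04583 — 3 statements merged into one kernel-verified Lean document; each statement's English description precedes it below -/
import Mathlib

section
/- Let λ, μ be real numbers with μ > 0 and 3λ + 2μ > 0, and let κ₀ = μ/(2(λ+2μ)). For n ≥ 1 define λ_{M,n} = (3λ − 2μ(2n² − 2n − 3))/(2(λ+2μ)(4n² − 1)). Then λ_{M,n} + κ₀ = (3λ + 5μ + 4μn)/(2(λ+2μ)(4n² − 1)) > 0 for all n ≥ 1, and lim_{n→∞} (λ_{M,n} + κ₀)/(μ/(2(λ+2μ)n)) = 1. -/
/-!
Adding `κ₀ = μ / (2D)` with `D = λ + 2μ` to `λ_{M,n}` cancels the quadratic term of the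
numerator, leaving `(3λ + 5μ + 4μn) / (2D(4n² - 1))`. Both `D = ((3λ + 2μ) + 4μ) / 3` and
`3λ + 5μ + 4μn = (3λ + 2μ) + 3μ + 4μn` are positive, and after dividing numerator and
denominator by `n²` the ratio to `μ / (2Dn)` is a function of `1/n` continuous at `0` with
value `1` there.
-/

open Filter Topology

section ShiftedEigenvalue

variable {lam mu : ℝ}

theorem lam_add_two_mu_pos (hmu : 0 < mu) (hconv : 0 < 3 * lam + 2 * mu) :
    0 < lam + 2 * mu := by
  linarith

theorem shifted_eigenvalue_eq {D x : ℝ} (hD : D ≠ 0) (hx : 4 * x ^ 2 - 1 ≠ 0) :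
    (3 * lam - 2 * mu * (2 * x ^ 2 - 2 * x - 3)) / (2 * D * (4 * x ^ 2 - 1)) + mu / (2 * D) =
      (3 * lam + 5 * mu + 4 * mu * x) / (2 * D * (4 * x ^ 2 - 1)) := by
  have h2D : 2 * D ≠ 0 := mul_ne_zero two_ne_zero hD
  have hden : 2 * D * (4 * x ^ 2 - 1) ≠ 0 := mul_ne_zero h2D hx
  rw [div_add_div _ _ hden h2D, div_eq_div_iff (mul_ne_zero hden h2D) hden]
  ring

theorem shifted_eigenvalue_pos {x : ℝ} (hmu : 0 < mu) (hconv : 0 < 3 * lam + 2 * mu)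
    (hx : 1 ≤ x) :
    0 < (3 * lam + 5 * mu + 4 * mu * x) / (2 * (lam + 2 * mu) * (4 * x ^ 2 - 1)) := by
  have hnum : 0 < 3 * lam + 5 * mu + 4 * mu * x := by nlinarith
  have hquad : 0 < 4 * x ^ 2 - 1 := by nlinarith
  have hD := lam_add_two_mu_pos hmu hconv
  positivity

theorem tendsto_shifted_eigenvalue_div (a : ℝ) {D : ℝ} (hmu : mu ≠ 0) (hD : D ≠ 0) :
    Tendsto (fun x : ℝ => (a + 4 * mu * x) / (2 * D * (4 * x ^ 2 - 1)) / (mu / (2 * D * x)))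
      atTop (𝓝 1) := by
  set g : ℝ → ℝ := fun t => (4 * mu + a * t) / (mu * (4 - t ^ 2))
  have hg : ContinuousAt g 0 := by
    refine ContinuousAt.div (by fun_prop) (by fun_prop) ?_
    simpa using hmu
  have hg0 : g 0 = 1 := by
    simp only [g]
    field_simp
    ring
  have hlim : Tendsto (fun x : ℝ => g x⁻¹) atTop (𝓝 1) :=
    hg0 ▸ hg.tendsto.comp tendsto_inv_atTop_zero
  refine hlim.congr' ?_
  filter_upwards [eventually_gt_atTop 1] with x hx
  have hquad : 4 * x ^ 2 - 1 ≠ 0 := by nlinarith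
  simp only [g]
  field_simp
  ring

end ShiftedEigenvalue

/-- The shifted eigenvalues `λ_{M,n} + κ₀` of the elastostatic Neumann–Poincaré operator:
explicit formula, positivity for all `n ≥ 1`, and asymptotics `∼ μ/(2(λ+2μ)n)`. -/
theorem lambdaM_shifted_pos_and_asymp (lam mu : ℝ) (hmu : 0 < mu)
    (hconv : 0 < 3 * lam + 2 * mu)
    (kappa0 : ℝ) (hkappa0 : kappa0 = mu / (2 * (lam + 2 * mu)))
    (lamM : ℕ → ℝ)
    (hlamM : ∀ n : ℕ, lamM n =
      (3 * lam - 2 * mu * (2 * (n:ℝ)^2 - 2 * (n:ℝ) - 3)) /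
        (2 * (lam + 2 * mu) * (4 * (n:ℝ)^2 - 1))) :
    (∀ n : ℕ, 1 ≤ n →
      lamM n + kappa0 =
        (3 * lam + 5 * mu + 4 * mu * (n:ℝ)) / (2 * (lam + 2 * mu) * (4 * (n:ℝ)^2 - 1)) ∧
      0 < lamM n + kappa0) ∧
    Tendsto (fun n : ℕ => (lamM n + kappa0) / (mu / (2 * (lam + 2 * mu) * (n:ℝ))))
      atTop (nhds 1) := by
  have hD := (lam_add_two_mu_pos hmu hconv).ne'
  have hclosed : ∀ n : ℕ, 1 ≤ n → lamM n + kappa0 =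
      (3 * lam + 5 * mu + 4 * mu * (n:ℝ)) / (2 * (lam + 2 * mu) * (4 * (n:ℝ)^2 - 1)) := by
    intro n hn
    have hn' : (1 : ℝ) ≤ n := by exact_mod_cast hn
    rw [hlamM, hkappa0, shifted_eigenvalue_eq hD (by nlinarith)]
  refine ⟨fun n hn => ⟨hclosed n hn, ?_⟩, ?_⟩
  · rw [hclosed n hn]
    exact shifted_eigenvalue_pos hmu hconv (by exact_mod_cast hn)
  · refine ((tendsto_shifted_eigenvalue_div (3 * lam + 5 * mu) hmu.ne' hD).comp
      tendsto_natCast_atTop_atTop).congr' ?_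
    filter_upwards [eventually_ge_atTop 1] with n hn
    simp only [Function.comp_apply, hclosed n hn]
end

section
/- Let λ, μ be real numbers with μ > 0 and 3λ + 2μ > 0, and let κ₀ = μ/(2(λ+2μ)). For n ≥ 1 define λ_{N,n} = (−3λ + 2μ(2n² + 2n − 3))/(2(λ+2μ)(4n² − 1)). Then λ_{N,n} − κ₀ = (−(3λ+5μ) + 4μn)/(2(λ+2μ)(4n² − 1)) > 0 for all natural numbers n ≥ ⌊(3λ+5μ)/(4μ)⌋ + 1, and lim_{n→∞} (λ_{N,n} − κ₀)/(μ/(2(λ+2μ)n)) = 1. -/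
/-!
Subtracting `κ₀` cancels the `n²` terms of the numerator of `λ_{N,n}`, leaving
`(4μn − (3λ+5μ)) / (2(λ+2μ)(4n² − 1))`. Its sign is that of the linear numerator once `n ≥ 1`,
and multiplying by `2(λ+2μ)n/μ` gives the ratio `(4μn² − (3λ+5μ)n) / (4μn² − μ)` of two
quadratics with the same leading coefficient, which tends to `1`.
-/

open Filter Topology

theorem tendsto_quadratic_div_quadratic_nat {a : ℝ} (ha : a ≠ 0) (b c : ℝ) :
    Tendsto (fun n : ℕ => (a * n ^ 2 + b * n) / (a * n ^ 2 + c)) atTop (𝓝 1) := by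
  have h0 : Tendsto (fun n : ℕ => (n : ℝ)⁻¹) atTop (𝓝 0) := tendsto_inv_atTop_nhds_zero_nat
  have hlim : Tendsto (fun n : ℕ => (a + b * (n : ℝ)⁻¹) / (a + c * ((n : ℝ)⁻¹) ^ 2)) atTop
      (𝓝 ((a + b * 0) / (a + c * 0 ^ 2))) :=
    (tendsto_const_nhds.add (h0.const_mul b)).div
      (tendsto_const_nhds.add ((h0.pow 2).const_mul c)) (by simpa using ha)
  rw [show (a + b * 0) / (a + c * 0 ^ 2) = 1 by simp [ha]] at hlim
  refine hlim.congr' ?_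
  filter_upwards [eventually_ne_atTop 0] with n hn
  have hn' : (n : ℝ) ≠ 0 := Nat.cast_ne_zero.mpr hn
  rw [← mul_div_mul_right _ _ (pow_ne_zero 2 hn')]
  congr 1 <;> field_simp

theorem Int.lt_of_floor_add_one_le {x : ℝ} {n : ℤ} (h : ⌊x⌋ + 1 ≤ n) : x < n :=
  Int.floor_lt.mp (Int.add_one_le_iff.mp h)

theorem four_mul_natCast_sq_sub_one_ne_zero (n : ℕ) : 4 * (n : ℝ) ^ 2 - 1 ≠ 0 :=
  sub_ne_zero.mpr (by exact_mod_cast (by omega : 4 * n ^ 2 ≠ 1))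

section Elastostatic

variable {lam mu : ℝ}

theorem eigenvalueN_sub_kappa0_eq (hD : lam + 2 * mu ≠ 0) {x : ℝ} (hx : 4 * x ^ 2 - 1 ≠ 0) :
    (-(3 * lam) + 2 * mu * (2 * x ^ 2 + 2 * x - 3)) / (2 * (lam + 2 * mu) * (4 * x ^ 2 - 1))
        - mu / (2 * (lam + 2 * mu)) =
      (-(3 * lam + 5 * mu) + 4 * mu * x) / (2 * (lam + 2 * mu) * (4 * x ^ 2 - 1)) := by
  rw [div_sub_div _ _ (by positivity) (by positivity),
    div_eq_div_iff (by positivity) (by positivity)]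
  ring

theorem shiftedN_pos (hD : 0 < lam + 2 * mu) {x : ℝ} (hx : 1 ≤ x)
    (hnum : 3 * lam + 5 * mu < 4 * mu * x) :
    0 < (-(3 * lam + 5 * mu) + 4 * mu * x) / (2 * (lam + 2 * mu) * (4 * x ^ 2 - 1)) :=
  div_pos (by linarith) (mul_pos (by positivity) (by nlinarith))

theorem shiftedN_div_leading_eq (hmu : mu ≠ 0) (hD : lam + 2 * mu ≠ 0) {x : ℝ}
    (hx : 4 * x ^ 2 - 1 ≠ 0) :
    (-(3 * lam + 5 * mu) + 4 * mu * x) / (2 * (lam + 2 * mu) * (4 * x ^ 2 - 1)) /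
        (mu / (2 * (lam + 2 * mu) * x)) =
      (4 * mu * x ^ 2 + -(3 * lam + 5 * mu) * x) / (4 * mu * x ^ 2 + -mu) := by
  have hq : 4 * mu * x ^ 2 + -mu ≠ 0 := by
    rw [show 4 * mu * x ^ 2 + -mu = mu * (4 * x ^ 2 - 1) by ring]
    positivity
  rw [div_div_div_eq, div_eq_div_iff (by positivity) hq]
  ring

end Elastostatic

/-- The shifted eigenvalues `λ_{N,n} − κ₀` of the elastostatic Neumann–Poincaré operator:
explicit formula and positivity for `n ≥ ⌊(3λ+5μ)/(4μ)⌋ + 1`, and asymptotics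
`∼ μ/(2(λ+2μ)n)`. -/
theorem lambdaN_shifted_pos_and_asymp (lam mu : ℝ) (hmu : 0 < mu)
    (hconv : 0 < 3 * lam + 2 * mu)
    (kappa0 : ℝ) (hkappa0 : kappa0 = mu / (2 * (lam + 2 * mu)))
    (lamN : ℕ → ℝ)
    (hlamN : ∀ n : ℕ, lamN n =
      (-(3 * lam) + 2 * mu * (2 * (n:ℝ)^2 + 2 * (n:ℝ) - 3)) /
        (2 * (lam + 2 * mu) * (4 * (n:ℝ)^2 - 1))) :
    (∀ n : ℕ, ⌊(3 * lam + 5 * mu) / (4 * mu)⌋ + 1 ≤ (n : ℤ) →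
      lamN n - kappa0 =
        (-(3 * lam + 5 * mu) + 4 * mu * (n:ℝ)) / (2 * (lam + 2 * mu) * (4 * (n:ℝ)^2 - 1)) ∧
      0 < lamN n - kappa0) ∧
    Tendsto (fun n : ℕ => (lamN n - kappa0) / (mu / (2 * (lam + 2 * mu) * (n:ℝ))))
      atTop (nhds 1) := by
  have hD : 0 < lam + 2 * mu := by linarith
  have hshift (n : ℕ) : lamN n - kappa0 =
      (-(3 * lam + 5 * mu) + 4 * mu * n) / (2 * (lam + 2 * mu) * (4 * (n : ℝ) ^ 2 - 1)) :=
    hlamN n ▸ hkappa0 ▸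
    eigenvalueN_sub_kappa0_eq hD.ne' (four_mul_natCast_sq_sub_one_ne_zero n)
  refine ⟨fun n hn => ⟨hshift n, ?_⟩, ?_⟩
  · have hlt : (3 * lam + 5 * mu) / (4 * mu) < n := by
      exact_mod_cast Int.lt_of_floor_add_one_le hn
    have hnum : 3 * lam + 5 * mu < 4 * mu * n := (div_lt_iff₀' (by positivity)).mp hlt
    have hn_pos : (0 : ℝ) < n := (div_pos (by linarith) (by positivity)).trans hlt
    rw [hshift n]
    exact shiftedN_pos hD (Nat.one_le_cast.mpr (Nat.cast_pos.mp hn_pos)) hnum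
  · refine (tendsto_quadratic_div_quadratic_nat (a := 4 * mu) (by positivity)
      (-(3 * lam + 5 * mu)) (-mu)).congr fun n => ?_
    rw [hshift n, shiftedN_div_leading_eq hmu.ne' hD.ne' (four_mul_natCast_sq_sub_one_ne_zero n)]
end

section
/- Let λ, μ satisfy μ > 0 and 3λ + 2μ > 0, and set λ_{T,n} = 3/(2(2n+1)), λ_{M,n} = (3λ − 2μ(2n² − 2n − 3))/(2(λ+2μ)(4n² − 1)), λ_{N,n} = (−3λ + 2μ(2n² + 2n − 3))/(2(λ+2μ)(4n² − 1)). Then λ_{T,1} = 1/2, λ_{M,1} = 1/2, and for all n ≥ 2 one has 1/2 − λ_{T,n} > 0 and 1/2 − λ_{M,n} > 0, and for all n ≥ 1 one has 1/2 − λ_{N,n} > 0. -/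
/-- Sign properties of the Neumann–Poincaré eigenvalues:
`λ_{T,1} = λ_{M,1} = 1/2`, `1/2 − λ_{T,n} > 0` and `1/2 − λ_{M,n} > 0` for `n ≥ 2`,
and `1/2 − λ_{N,n} > 0` for all `n ≥ 1`. -/
theorem NP_eigenvalue_signs (lam mu : ℝ) (hmu : 0 < mu) (hconv : 0 < 3 * lam + 2 * mu)
    (lamT lamM lamN : ℕ → ℝ)
    (hlamT : ∀ n : ℕ, lamT n = 3 / (2 * (2 * (n:ℝ) + 1)))
    (hlamM : ∀ n : ℕ, lamM n =
      (3 * lam - 2 * mu * (2 * (n:ℝ)^2 - 2 * (n:ℝ) - 3)) /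
        (2 * (lam + 2 * mu) * (4 * (n:ℝ)^2 - 1)))
    (hlamN : ∀ n : ℕ, lamN n =
      (-(3 * lam) + 2 * mu * (2 * (n:ℝ)^2 + 2 * (n:ℝ) - 3)) /
        (2 * (lam + 2 * mu) * (4 * (n:ℝ)^2 - 1))) :
    lamT 1 = 1 / 2 ∧ lamM 1 = 1 / 2 ∧
    (∀ n : ℕ, 2 ≤ n → 0 < 1 / 2 - lamT n ∧ 0 < 1 / 2 - lamM n) ∧
    (∀ n : ℕ, 1 ≤ n → 0 < 1 / 2 - lamN n) := by
  have hl2 : 0 < lam + 2 * mu := by linarith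
  refine ⟨?_, ?_, ?_, ?_⟩
  · rw [hlamT]; norm_num
  · rw [hlamM]; push_cast; rw [div_eq_iff (by norm_num; linarith)]; ring
  · intro n hn
    have hx : (2:ℝ) ≤ (n:ℝ) := by exact_mod_cast hn
    have hx1 : (0:ℝ) < (n:ℝ) - 1 := by linarith
    have hxx : (0:ℝ) < (n:ℝ)^2 - 1 := by nlinarith
    have hd : 0 < 2 * (lam + 2 * mu) * (4 * (n:ℝ)^2 - 1) := by
      apply mul_pos (by linarith); nlinarith
    constructor
    · rw [hlamT]
      have : 3 / (2 * (2 * (n:ℝ) + 1)) < 1 / 2 := by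
        rw [div_lt_div_iff₀ (by linarith) (by norm_num)]; linarith
      linarith
    · rw [hlamM, sub_pos, div_lt_iff₀ hd]
      nlinarith [mul_pos hconv hxx, mul_pos hmu (mul_pos hx1 (show (0:ℝ) < 7*(n:ℝ)+4 by linarith))]
  · intro n hn
    have hx : (1:ℝ) ≤ (n:ℝ) := by exact_mod_cast hn
    have hd : 0 < 2 * (lam + 2 * mu) * (4 * (n:ℝ)^2 - 1) := by
      apply mul_pos (by linarith); nlinarith
    have hkey : (0:ℝ) ≤ ((n:ℝ) - 1) * ((n:ℝ) - 2) := by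
      rcases Nat.lt_or_ge n 2 with h | h
      · have : n = 1 := by omega
        subst this; norm_num
      · have : (2:ℝ) ≤ (n:ℝ) := by exact_mod_cast h
        nlinarith
    rw [hlamN, sub_pos, div_lt_iff₀ hd]
    nlinarith [mul_pos hconv (show (0:ℝ) < 2*(n:ℝ)^2+1 by nlinarith), mul_nonneg hmu.le hkey]
end
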